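/- The Rayleigh-fading detection probability P_d = 1 − F(Θ) + ∫₀^Θ exp(−(Θ−i)·4πd^(2α)/(ωκσ)) f(i) di, with F(i) = exp(−C·ω^(2/α)·i^(−2/α)) where C = λδφ²Ω/(4π) and Θ = ω·T for T independent of ω, does not depend on ω: substituting i = ω·u shows the expression is invariant under changes of ω > 0. -/

import Mathlib

/-!
With `Φ u = exp (-C u^(-2/α))` one has `F_ω i = Φ (i / ω)`, and the kernel of the integral is a
function of `(Θ(ω) - i) / ω = T - i / ω`. Substituting `i = ω u` therefore removes `ω` from
`P_d(ω)`: the Jacobian `ω` cancels the factor `1 / ω` of the chain rule in `f_ω = F_ω'`.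
-/

open Real Set intervalIntegral

theorem Real.mul_rpow_of_pos_left {a : ℝ} (ha : 0 < a) (x y : ℝ) :
    (a * x) ^ y = a ^ y * x ^ y := by
  rcases le_or_gt 0 x with hx | hx
  · exact mul_rpow ha.le hx
  · rw [rpow_def_of_neg (mul_neg_of_pos_of_neg ha hx), rpow_def_of_neg hx, rpow_def_of_pos ha,
      log_mul ha.ne' hx.ne, add_mul, exp_add, mul_assoc]

theorem Real.inv_mul_rpow_of_pos {a : ℝ} (ha : 0 < a) (x y : ℝ) :
    (a⁻¹ * x) ^ y = a ^ (-y) * x ^ y := by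
  rw [mul_rpow_of_pos_left (inv_pos.2 ha), inv_rpow ha.le, rpow_neg ha.le]

/-- No regularity of `Φ` is needed: `deriv_comp_mul_left` also holds where `Φ` is not
differentiable, both sides then being `0`. -/
theorem intervalIntegral.integral_mul_deriv_comp_inv_mul (K Φ : ℝ → ℝ) {c : ℝ} (hc : c ≠ 0)
    (T : ℝ) :
    ∫ i in (0 : ℝ)..c * T, K (c⁻¹ * i) * deriv (fun x ↦ Φ (c⁻¹ * x)) i =
      ∫ u in (0 : ℝ)..T, K u * deriv Φ u := by
  have hsubst := smul_integral_comp_mul_left (a := 0) (b := T)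
    (fun i ↦ K (c⁻¹ * i) * deriv (fun x ↦ Φ (c⁻¹ * x)) i) c
  rw [mul_zero] at hsubst
  rw [← hsubst, smul_eq_mul, ← integral_const_mul]
  refine integral_congr fun u _ ↦ ?_
  simp only [deriv_comp_mul_left c⁻¹ Φ, inv_mul_cancel_left₀ hc, smul_eq_mul]
  field_simp

theorem stmt13_general (α κ σ d T : ℝ)
    (C : ℝ)
    (F : ℝ → ℝ → ℝ)
    (hF : ∀ ω i, F ω i = Real.exp (-C * ω ^ ((2 : ℝ) / α) * i ^ (-(2 : ℝ) / α)))
    (f : ℝ → ℝ → ℝ) (hf : ∀ ω i, f ω i = deriv (F ω) i)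
    (Θ : ℝ → ℝ) (hΘ : ∀ ω, Θ ω = ω * T)
    (Pd : ℝ → ℝ)
    (hPd : ∀ ω, Pd ω = 1 - F ω (Θ ω) +
      ∫ i in (0 : ℝ)..(Θ ω),
        Real.exp (-((Θ ω - i) * (4 * π) * d ^ (2 * α) / (ω * κ * σ))) * f ω i) :
    ∀ ω₁ ω₂ : ℝ, 0 < ω₁ → 0 < ω₂ → Pd ω₁ = Pd ω₂ := by
  set Φ : ℝ → ℝ := fun u ↦ exp (-C * u ^ (-(2 : ℝ) / α))
  set K : ℝ → ℝ := fun u ↦ exp (-((T - u) * (4 * π) * d ^ (2 * α) / (κ * σ)))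
  suffices key : ∀ ω, 0 < ω → Pd ω = 1 - Φ T + ∫ u in (0 : ℝ)..T, K u * deriv Φ u by
    intro ω₁ ω₂ h₁ h₂
    rw [key ω₁ h₁, key ω₂ h₂]
  intro ω hω
  have hFω : F ω = fun i ↦ Φ (ω⁻¹ * i) := funext fun i ↦ by
    simp only [Φ]
    rw [hF, inv_mul_rpow_of_pos hω, neg_div, neg_neg, mul_assoc]
  have hkernel (i : ℝ) :
      exp (-((ω * T - i) * (4 * π) * d ^ (2 * α) / (ω * κ * σ))) = K (ω⁻¹ * i) := by
    have hfactor : (ω * T - i) * (4 * π) * d ^ (2 * α) =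
        ω * ((T - ω⁻¹ * i) * (4 * π) * d ^ (2 * α)) := by
      field_simp
    rw [hfactor, mul_assoc ω κ, mul_div_mul_left _ _ hω.ne']
  simp only [hPd, hΘ, hf, hkernel, hFω, inv_mul_cancel_left₀ hω.ne',
    integral_mul_deriv_comp_inv_mul K Φ hω.ne']

/-- The Rayleigh-fading detection probability does not depend on
`ω = P_t G_m² ℓ`: with `F_ω(i) = exp(-C·ω^(2/α)·i^(-2/α))`,
`C = λδφ²Ω/(4π)`, density `f_ω = F_ω'`, and threshold `Θ(ω) = ω·T`
proportional to `ω`, the quantity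
`P_d(ω) = 1 - F_ω(Θ(ω)) + ∫₀^{Θ(ω)} exp(-(Θ(ω)-i)·4πd^(2α)/(ωκσ)) f_ω(i) di`
takes the same value for every `ω > 0`. -/
theorem stmt13 (α lam δ φ Ωm κ σ d T : ℝ) (hα : 2 < α) (hlam : 0 < lam)
    (hδ : 0 < δ) (hφ : 0 < φ) (hΩ : 0 < Ωm) (hκ : 0 < κ) (hσ : 0 < σ)
    (hd : 0 < d) (hT : 0 < T)
    (C : ℝ) (hC : C = lam * δ * φ ^ 2 * Ωm / (4 * π))
    (F : ℝ → ℝ → ℝ)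
    (hF : ∀ ω i, F ω i = Real.exp (-C * ω ^ ((2 : ℝ) / α) * i ^ (-(2 : ℝ) / α)))
    (f : ℝ → ℝ → ℝ) (hf : ∀ ω i, f ω i = deriv (F ω) i)
    (Θ : ℝ → ℝ) (hΘ : ∀ ω, Θ ω = ω * T)
    (Pd : ℝ → ℝ)
    (hPd : ∀ ω, Pd ω = 1 - F ω (Θ ω) +
      ∫ i in (0 : ℝ)..(Θ ω),
        Real.exp (-((Θ ω - i) * (4 * π) * d ^ (2 * α) / (ω * κ * σ))) * f ω i) :
    ∀ ω₁ ω₂ : ℝ, 0 < ω₁ → 0 < ω₂ → Pd ω₁ = Pd ω₂ :=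
  stmt13_general α κ σ d T C F hF f hf Θ hΘ Pd hPd
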